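/- arXiv:2012.10903 — 3 statements merged into one kernel-verified Lean document; each statement's English description precedes it below -/
import Mathlib

section
/- Let p0 be a differentiable probability density on ℝ and pw a twice differentiable probability density on ℝ. Assume: (A1) p0(x)·(log pw)'(x) → 0 as x → ±∞; (A2) ∫ p0(x)((log p0)'(x))² dx < ∞ and ∫ p0(x)((log pw)'(x))² dx < ∞; (A3) ∫ p0(x)|(log pw)''(x)| dx < ∞. Then D_F(p0‖pw) = ∫ p0(x)[ (1/2)((log pw)'(x))² + (log pw)''(x) ] dx + C, where C = (1/2)∫ p0(x)((log p0)'(x))² dx does not depend on pw. -/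
/-!
Expanding the square, `D_F(p0‖pw)` is `(1/2)∫ p0 (log p0)'² - ∫ p0 (log p0)' (log pw)' + (1/2)∫ p0 (log pw)'²`.
Since `p0 (log p0)' = p0'`, the cross term is `∫ p0' (log pw)'`, and integrating by parts (the boundary
term vanishes by (A1)) turns it into `-∫ p0 (log pw)''`. Assumption (A2) makes the cross term
integrable through `|ab| ≤ (a² + b²)/2`.
-/

open MeasureTheory Filter Topology

section WeightedSquares

variable {α : Type*} [MeasurableSpace α] {μ : Measure α} {p u v : α → ℝ}

theorem integrable_mul_mul_of_integrable_mul_sq (hp : ∀ x, 0 ≤ p x)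
    (hm : AEStronglyMeasurable (fun x => p x * u x * v x) μ)
    (hu : Integrable (fun x => p x * u x ^ 2) μ) (hv : Integrable (fun x => p x * v x ^ 2) μ) :
    Integrable (fun x => p x * u x * v x) μ := by
  refine ((hu.add hv).const_mul (1 / 2)).mono' hm (ae_of_all _ fun x => ?_)
  have hamgm : |u x| * |v x| ≤ (1 / 2) * (u x ^ 2 + v x ^ 2) := by
    nlinarith [sq_nonneg (|u x| - |v x|), sq_abs (u x), sq_abs (v x)]
  calc ‖p x * u x * v x‖ = p x * (|u x| * |v x|) := by
        rw [Real.norm_eq_abs, abs_mul, abs_mul, abs_of_nonneg (hp x), mul_assoc]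
    _ ≤ p x * ((1 / 2) * (u x ^ 2 + v x ^ 2)) := mul_le_mul_of_nonneg_left hamgm (hp x)
    _ = (1 / 2) * (p x * u x ^ 2 + p x * v x ^ 2) := by ring

theorem integral_mul_sub_sq (hu : Integrable (fun x => p x * u x ^ 2) μ)
    (hv : Integrable (fun x => p x * v x ^ 2) μ) (huv : Integrable (fun x => p x * u x * v x) μ) :
    ∫ x, p x * (u x - v x) ^ 2 ∂μ
      = ∫ x, p x * u x ^ 2 ∂μ - 2 * ∫ x, p x * u x * v x ∂μ + ∫ x, p x * v x ^ 2 ∂μ := by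
  have hexpand : (fun x => p x * (u x - v x) ^ 2)
      = fun x => (p x * u x ^ 2 - 2 * (p x * u x * v x)) + p x * v x ^ 2 := by
    funext x; ring
  have hfirst : Integrable (fun x => p x * u x ^ 2 - 2 * (p x * u x * v x)) μ :=
    hu.sub (huv.const_mul 2)
  rw [hexpand, integral_add hfirst hv, integral_sub hu (huv.const_mul 2), integral_const_mul]

end WeightedSquares

theorem mul_deriv_log_eq_deriv {p : ℝ → ℝ} {x : ℝ} (hpd : DifferentiableAt ℝ p x) (hp : p x ≠ 0) :
    p x * deriv (fun y => Real.log (p y)) x = deriv p x := by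
  rw [deriv.log hpd hp]
  field_simp

theorem integral_mul_deriv_log_mul_eq_neg {p ψ : ℝ → ℝ} (hp : ∀ x, p x ≠ 0)
    (hpd : Differentiable ℝ p) (hψ : Differentiable ℝ ψ)
    (hbot : Tendsto (fun x => p x * ψ x) atBot (𝓝 0))
    (htop : Tendsto (fun x => p x * ψ x) atTop (𝓝 0))
    (hpψ' : Integrable fun x => p x * deriv ψ x)
    (hp'ψ : Integrable fun x => p x * deriv (fun y => Real.log (p y)) x * ψ x) :
    ∫ x, p x * deriv (fun y => Real.log (p y)) x * ψ x = -∫ x, p x * deriv ψ x := by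
  simp only [mul_deriv_log_eq_deriv (hpd _) (hp _)] at hp'ψ ⊢
  have hparts := integral_mul_deriv_eq_deriv_mul (fun x _ => (hpd x).hasDerivAt)
    (fun x _ => (hψ x).hasDerivAt) hpψ' hp'ψ hbot htop
  simp only [sub_zero, zero_sub] at hparts
  linarith

theorem explicit_fisher_divergence_real_line_general
    (p0 pw : ℝ → ℝ)
    (hp0pos : ∀ x, 0 < p0 x) (hpwpos : ∀ x, 0 < pw x)
    (hp0diff : Differentiable ℝ p0) (hpwdiff : ContDiff ℝ 2 pw)
    (hA1top : Tendsto (fun x => p0 x * deriv (fun y => Real.log (pw y)) x) atTop (nhds 0))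
    (hA1bot : Tendsto (fun x => p0 x * deriv (fun y => Real.log (pw y)) x) atBot (nhds 0))
    (hA2a : Integrable (fun x => p0 x * (deriv (fun y => Real.log (p0 y)) x)^2))
    (hA2b : Integrable (fun x => p0 x * (deriv (fun y => Real.log (pw y)) x)^2))
    (hA3 : Integrable (fun x => p0 x * |deriv (deriv (fun y => Real.log (pw y))) x|)) :
    (1/2) * (∫ x, p0 x * (deriv (fun y => Real.log (p0 y)) x
        - deriv (fun y => Real.log (pw y)) x)^2)
      = (∫ x, p0 x * ((1/2) * (deriv (fun y => Real.log (pw y)) x)^2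
            + deriv (deriv (fun y => Real.log (pw y))) x))
        + (1/2) * (∫ x, p0 x * (deriv (fun y => Real.log (p0 y)) x)^2) := by
  set u := deriv (fun y => Real.log (p0 y))
  set ψ := deriv (fun y => Real.log (pw y))
  have hψdiff : Differentiable ℝ ψ :=
    (hpwdiff.log fun x => (hpwpos x).ne').differentiable_deriv_two
  have hφint : Integrable fun x => p0 x * deriv ψ x := by
    refine hA3.mono' (hp0diff.continuous.aestronglyMeasurable.mul
      (measurable_deriv ψ).aestronglyMeasurable) (ae_of_all _ fun x => ?_)
    rw [Real.norm_eq_abs, abs_mul, abs_of_pos (hp0pos x)]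
  have hcross : Integrable fun x => p0 x * u x * ψ x :=
    integrable_mul_mul_of_integrable_mul_sq (fun x => (hp0pos x).le)
      ((hp0diff.continuous.measurable.mul (measurable_deriv _)).mul
        (measurable_deriv _)).aestronglyMeasurable hA2a hA2b
  have hparts : ∫ x, p0 x * u x * ψ x = -∫ x, p0 x * deriv ψ x :=
    integral_mul_deriv_log_mul_eq_neg (fun x => (hp0pos x).ne') hp0diff hψdiff
      hA1bot hA1top hφint hcross
  have hsplit : ∫ x, p0 x * ((1/2) * ψ x ^ 2 + deriv ψ x)
      = (1/2) * (∫ x, p0 x * ψ x ^ 2) + ∫ x, p0 x * deriv ψ x := by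
    have hexpand : (fun x => p0 x * ((1/2) * ψ x ^ 2 + deriv ψ x))
        = fun x => (1/2) * (p0 x * ψ x ^ 2) + p0 x * deriv ψ x := by
      funext x; ring
    rw [hexpand, integral_add (hA2b.const_mul _) hφint, integral_const_mul]
  rw [integral_mul_sub_sq hA2a hA2b hcross, hsplit, hparts]
  ring

theorem explicit_fisher_divergence_real_line
    (p0 pw : ℝ → ℝ)
    (hp0pos : ∀ x, 0 < p0 x) (hpwpos : ∀ x, 0 < pw x)
    (hp0diff : Differentiable ℝ p0) (hpwdiff : ContDiff ℝ 2 pw)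
    (hp0int : ∫ x, p0 x = 1) (hpwint : ∫ x, pw x = 1)
    (hA1top : Tendsto (fun x => p0 x * deriv (fun y => Real.log (pw y)) x) atTop (nhds 0))
    (hA1bot : Tendsto (fun x => p0 x * deriv (fun y => Real.log (pw y)) x) atBot (nhds 0))
    (hA2a : Integrable (fun x => p0 x * (deriv (fun y => Real.log (p0 y)) x)^2))
    (hA2b : Integrable (fun x => p0 x * (deriv (fun y => Real.log (pw y)) x)^2))
    (hA3 : Integrable (fun x => p0 x * |deriv (deriv (fun y => Real.log (pw y))) x|)) :
    (1/2) * (∫ x, p0 x * (deriv (fun y => Real.log (p0 y)) x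
        - deriv (fun y => Real.log (pw y)) x)^2)
      = (∫ x, p0 x * ((1/2) * (deriv (fun y => Real.log (pw y)) x)^2
            + deriv (deriv (fun y => Real.log (pw y))) x))
        + (1/2) * (∫ x, p0 x * (deriv (fun y => Real.log (p0 y)) x)^2) :=
  explicit_fisher_divergence_real_line_general p0 pw hp0pos hpwpos hp0diff hpwdiff hA1top hA1bot
    hA2a hA2b hA3
end

section
/- Let p0 be a differentiable probability density and pw a twice differentiable probability density on the bounded interval (a,b) ⊂ ℝ. Assume p0(x)·(log pw)'(x) → 0 as x ↘ a and x ↗ b, and the integrability conditions ∫ p0((log p0)')² < ∞, ∫ p0((log pw)')² < ∞, ∫ p0|(log pw)''| < ∞ hold. Then (1/2)∫_a^b p0(x)((log p0)'(x) − (log pw)'(x))² dx = ∫_a^b p0(x)[(1/2)((log pw)'(x))² + (log pw)''(x)] dx + C with C independent of pw. -/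
open MeasureTheory Filter Set

theorem explicit_fisher_divergence_bounded_interval
    (a b : ℝ) (hab : a < b) (p0 pw : ℝ → ℝ)
    (hp0pos : ∀ x ∈ Ioo a b, 0 < p0 x) (hpwpos : ∀ x ∈ Ioo a b, 0 < pw x)
    (hp0diff : DifferentiableOn ℝ p0 (Ioo a b)) (hpwdiff : ContDiffOn ℝ 2 pw (Ioo a b))
    (hp0int : ∫ x in Ioo a b, p0 x = 1) (hpwint : ∫ x in Ioo a b, pw x = 1)
    (hA1a : Tendsto (fun x => p0 x * deriv (fun y => Real.log (pw y)) x)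
      (nhdsWithin a (Ioo a b)) (nhds 0))
    (hA1b : Tendsto (fun x => p0 x * deriv (fun y => Real.log (pw y)) x)
      (nhdsWithin b (Ioo a b)) (nhds 0))
    (hA2a : IntegrableOn (fun x => p0 x * (deriv (fun y => Real.log (p0 y)) x)^2) (Ioo a b))
    (hA2b : IntegrableOn (fun x => p0 x * (deriv (fun y => Real.log (pw y)) x)^2) (Ioo a b))
    (hA3 : IntegrableOn (fun x => p0 x * |deriv (deriv (fun y => Real.log (pw y))) x|) (Ioo a b)) :
    (1/2) * (∫ x in Ioo a b, p0 x * (deriv (fun y => Real.log (p0 y)) x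
        - deriv (fun y => Real.log (pw y)) x)^2)
      = (∫ x in Ioo a b, p0 x * ((1/2) * (deriv (fun y => Real.log (pw y)) x)^2
            + deriv (deriv (fun y => Real.log (pw y))) x))
        + (1/2) * (∫ x in Ioo a b, p0 x * (deriv (fun y => Real.log (p0 y)) x)^2) := by
  have hopen : IsOpen (Ioo a b) := isOpen_Ioo
  set s0 : ℝ → ℝ := deriv (fun y => Real.log (p0 y)) with hs0def
  set sw : ℝ → ℝ := deriv (fun y => Real.log (pw y)) with hswdef
  set sw' : ℝ → ℝ := deriv sw with hsw'def
  -- basic differentiability facts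
  have hp0at : ∀ x ∈ Ioo a b, DifferentiableAt ℝ p0 x := fun x hx =>
    (hp0diff x hx).differentiableAt (hopen.mem_nhds hx)
  have hpwat : ∀ x ∈ Ioo a b, DifferentiableAt ℝ pw x := fun x hx =>
    ((hpwdiff x hx).differentiableWithinAt (by norm_num)).differentiableAt (hopen.mem_nhds hx)
  -- s0 x = deriv p0 x / p0 x on Ioo
  have hs0 : ∀ x ∈ Ioo a b, s0 x = deriv p0 x / p0 x := fun x hx =>
    (((hp0at x hx).hasDerivAt).log (hp0pos x hx).ne').deriv
  have hsw : ∀ x ∈ Ioo a b, sw x = deriv pw x / pw x := fun x hx =>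
    (((hpwat x hx).hasDerivAt).log (hpwpos x hx).ne').deriv
  -- p0 x * s0 x = deriv p0 x on Ioo
  have hp0s0 : ∀ x ∈ Ioo a b, p0 x * s0 x = deriv p0 x := by
    intro x hx
    rw [hs0 x hx, mul_comm, div_mul_cancel₀ _ (hp0pos x hx).ne']
  -- sw is differentiable on Ioo
  have hderivpw : DifferentiableOn ℝ (deriv pw) (Ioo a b) :=
    (hpwdiff.deriv_of_isOpen (m := 1) hopen (by norm_num)).differentiableOn (by norm_num)
  have hswdiff : ∀ x ∈ Ioo a b, DifferentiableAt ℝ sw x := by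
    intro x hx
    have h1 : DifferentiableAt ℝ (fun y => deriv pw y / pw y) x := by
      refine DifferentiableAt.div ?_ (hpwat x hx) (hpwpos x hx).ne'
      exact (hderivpw x hx).differentiableAt (hopen.mem_nhds hx)
    refine h1.congr_of_eventuallyEq ?_
    filter_upwards [hopen.mem_nhds hx] with y hy
    exact hsw y hy
  -- measurability helpers
  have hp0meas : AEStronglyMeasurable p0 (volume.restrict (Ioo a b)) :=
    hp0diff.continuousOn.aestronglyMeasurable measurableSet_Ioo
  have hs0meas : Measurable s0 := measurable_deriv _
  have hswmeas : Measurable sw := measurable_deriv _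
  have hsw'meas : Measurable sw' := measurable_deriv _
  -- integrability of cross term p0 * s0 * sw
  have hcross : IntegrableOn (fun x => p0 x * s0 x * sw x) (Ioo a b) := by
    refine Integrable.mono' ((hA2a.add hA2b).const_mul (1/2)) ?_ ?_
    · exact (hp0meas.mul hs0meas.aestronglyMeasurable.restrict).mul
        hswmeas.aestronglyMeasurable.restrict
    · filter_upwards [ae_restrict_mem measurableSet_Ioo] with x hx
      have hp := (hp0pos x hx).le
      have h1 : |p0 x * s0 x * sw x| = p0 x * |s0 x * sw x| := by
        rw [mul_assoc, abs_mul, abs_of_nonneg hp]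
      simp only [Real.norm_eq_abs, Pi.add_apply]
      rw [h1]
      have h2 : |s0 x * sw x| ≤ (1/2) * ((s0 x)^2 + (sw x)^2) := by
        rw [abs_mul]
        nlinarith [sq_nonneg (|s0 x| - |sw x|), sq_abs (s0 x), sq_abs (sw x)]
      calc p0 x * |s0 x * sw x| ≤ p0 x * ((1/2) * ((s0 x)^2 + (sw x)^2)) :=
            mul_le_mul_of_nonneg_left h2 hp
        _ = (1/2) * (p0 x * (s0 x)^2 + p0 x * (sw x)^2) := by ring
  -- integrability of p0 * sw'
  have hpsw' : IntegrableOn (fun x => p0 x * sw' x) (Ioo a b) := by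
    refine Integrable.mono' hA3 (hp0meas.mul hsw'meas.aestronglyMeasurable.restrict) ?_
    filter_upwards [ae_restrict_mem measurableSet_Ioo] with x hx
    rw [Real.norm_eq_abs, abs_mul, abs_of_nonneg (hp0pos x hx).le]
  -- integration by parts: ∫ (p0 * sw)' = 0
  have key : ∫ x in Ioo a b, (p0 x * s0 x * sw x + p0 x * sw' x) = 0 := by
    set G' : ℝ → ℝ := fun x => deriv p0 x * sw x + p0 x * sw' x with hG'
    have hG'eq : EqOn (fun x => p0 x * s0 x * sw x + p0 x * sw' x) G' (Ioo a b) := by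
      intro x hx
      simp only [hG']
      rw [hp0s0 x hx]
    have hderivG : ∀ x ∈ Ioo a b, HasDerivAt (fun y => p0 y * sw y) (G' x) x := by
      intro x hx
      exact ((hp0at x hx).hasDerivAt).mul ((hswdiff x hx).hasDerivAt)
    have hsum : IntegrableOn (fun x => p0 x * s0 x * sw x + p0 x * sw' x) (Ioo a b) :=
      hcross.add hpsw'
    have hintG : IntegrableOn G' (Ioo a b) := hsum.congr_fun hG'eq measurableSet_Ioo
    have hIBP : ∫ y in a..b, G' y = 0 - 0 := by
      refine intervalIntegral.integral_eq_sub_of_hasDerivAt_of_tendsto hab hderivG ?_ ?_ ?_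
      · rwa [intervalIntegrable_iff_integrableOn_Ioo_of_le hab.le]
      · rw [← nhdsWithin_Ioo_eq_nhdsGT hab]; exact hA1a
      · rw [← nhdsWithin_Ioo_eq_nhdsLT hab]; exact hA1b
    rw [intervalIntegral.integral_of_le hab.le, integral_Ioc_eq_integral_Ioo] at hIBP
    rw [setIntegral_congr_fun measurableSet_Ioo hG'eq, hIBP, sub_zero]
  have key2 : (∫ x in Ioo a b, p0 x * s0 x * sw x) + ∫ x in Ioo a b, p0 x * sw' x = 0 := by
    rw [← integral_add hcross hpsw']; exact key
  -- expand LHS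
  have hLHS : ∫ x in Ioo a b, p0 x * (s0 x - sw x)^2
      = (∫ x in Ioo a b, p0 x * (s0 x)^2) - 2 * (∫ x in Ioo a b, p0 x * s0 x * sw x)
        + ∫ x in Ioo a b, p0 x * (sw x)^2 := by
    have : ∀ x, p0 x * (s0 x - sw x)^2
        = p0 x * (s0 x)^2 - 2 * (p0 x * s0 x * sw x) + p0 x * (sw x)^2 := fun x => by ring
    rw [show (fun x => p0 x * (s0 x - sw x)^2)
        = fun x => p0 x * (s0 x)^2 - 2 * (p0 x * s0 x * sw x) + p0 x * (sw x)^2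
      from funext this]
    have h1 : IntegrableOn (fun x => 2 * (p0 x * s0 x * sw x)) (Ioo a b) := hcross.const_mul 2
    have h2 : IntegrableOn (fun x => p0 x * (s0 x)^2 - 2 * (p0 x * s0 x * sw x)) (Ioo a b) :=
      hA2a.sub h1
    rw [integral_add h2 hA2b, integral_sub hA2a h1, integral_const_mul]
  -- expand RHS first integral
  have hRHS : ∫ x in Ioo a b, p0 x * ((1/2) * (sw x)^2 + sw' x)
      = (1/2) * (∫ x in Ioo a b, p0 x * (sw x)^2) + ∫ x in Ioo a b, p0 x * sw' x := by
    have : ∀ x, p0 x * ((1/2) * (sw x)^2 + sw' x)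
        = (1/2) * (p0 x * (sw x)^2) + p0 x * sw' x := fun x => by ring
    rw [show (fun x => p0 x * ((1/2) * (sw x)^2 + sw' x))
        = fun x => (1/2) * (p0 x * (sw x)^2) + p0 x * sw' x from funext this]
    have h3 : IntegrableOn (fun x => (1/2 : ℝ) * (p0 x * (sw x)^2)) (Ioo a b) :=
      hA2b.const_mul (1/2)
    rw [integral_add h3 hpsw', integral_const_mul]
  rw [hLHS, hRHS]
  linarith [key2]
end

section
/- Suppose the data distribution is a mixture p0(x) = α_A·p_A(x) + α_B·p_B(x) where p_A, p_B are differentiable probability densities supported on disjoint open sets 𝒳_A, 𝒳_B ⊂ 𝒳 (p_A > 0 exactly on 𝒳_A, p_B > 0 exactly on 𝒳_B), and α_A, α_B > 0, α_A + α_B = 1. Then for any other mixture weights β_A, β_B > 0 with β_A + β_B = 1, the density p_w(x) = β_A·p_A(x) + β_B·p_B(x) satisfies D_F(p0‖p_w) = 0, even though p_w ≠ p0 when β_A ≠ α_A. -/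
open MeasureTheory

lemma grad_add_const {d : ℕ} (f : EuclideanSpace ℝ (Fin d) → ℝ) (c : ℝ)
    (x : EuclideanSpace ℝ (Fin d)) :
    gradient (fun y => f y + c) x = gradient f x := by
  unfold gradient
  rw [fderiv_add_const]

theorem fisher_divergence_zero_for_disjoint_support_mixtures
    (d : ℕ) (pA pB : EuclideanSpace ℝ (Fin d) → ℝ)
    (XA XB : Set (EuclideanSpace ℝ (Fin d)))
    (hXAopen : IsOpen XA) (hXBopen : IsOpen XB) (hdisj : Disjoint XA XB)
    (hpAdiff : Differentiable ℝ pA) (hpBdiff : Differentiable ℝ pB)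
    (hpAnn : ∀ x, 0 ≤ pA x) (hpBnn : ∀ x, 0 ≤ pB x)
    (hpAsupp : ∀ x, 0 < pA x ↔ x ∈ XA) (hpBsupp : ∀ x, 0 < pB x ↔ x ∈ XB)
    (hpAint : ∫ x, pA x = 1) (hpBint : ∫ x, pB x = 1)
    (αA αB βA βB : ℝ) (hαA : 0 < αA) (hαB : 0 < αB) (hαsum : αA + αB = 1)
    (hβA : 0 < βA) (hβB : 0 < βB) (hβsum : βA + βB = 1) :
    ((1/2) * (∫ x, (αA * pA x + αB * pB x) *
        ‖gradient (fun y => Real.log (αA * pA y + αB * pB y)) x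
          - gradient (fun y => Real.log (βA * pA y + βB * pB y)) x‖^2) = 0)
    ∧ (βA ≠ αA →
        (fun x => βA * pA x + βB * pB x) ≠ (fun x => αA * pA x + αB * pB x)) := by
  have hA0 : ∀ x, x ∉ XA → pA x = 0 := fun x hx =>
    le_antisymm (by simpa [hpAsupp x, hx] using not_lt.mp (fun h => hx ((hpAsupp x).mp h))) (hpAnn x)
  have hB0 : ∀ x, x ∉ XB → pB x = 0 := fun x hx =>
    le_antisymm (not_lt.mp (fun h => hx ((hpBsupp x).mp h))) (hpBnn x)
  constructor
  · have h0 : ∀ x, (αA * pA x + αB * pB x) *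
        ‖gradient (fun y => Real.log (αA * pA y + αB * pB y)) x
          - gradient (fun y => Real.log (βA * pA y + βB * pB y)) x‖^2 = 0 := by
      intro x
      by_cases hxA : x ∈ XA
      · have hgrad : ∀ γ : ℝ, 0 < γ →
            gradient (fun y => Real.log (γ * pA y + (1 - γ) * pB y)) x
              = gradient (fun y => Real.log (pA y) + Real.log γ) x := by
          intro γ hγ
          apply Filter.EventuallyEq.gradient_eq
          filter_upwards [hXAopen.mem_nhds hxA] with y hy
          have hyB : y ∉ XB := fun h => (Set.disjoint_left.mp hdisj hy) h
          rw [hB0 y hyB, mul_zero, add_zero, Real.log_mul (ne_of_gt hγ)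
            (ne_of_gt ((hpAsupp y).mpr hy)), add_comm]
        have e1 : gradient (fun y => Real.log (αA * pA y + αB * pB y)) x
            = gradient (fun y => Real.log (pA y) + Real.log αA) x := by
          have := hgrad αA hαA
          rwa [show (1 - αA) = αB by linarith] at this
        have e2 : gradient (fun y => Real.log (βA * pA y + βB * pB y)) x
            = gradient (fun y => Real.log (pA y) + Real.log βA) x := by
          have := hgrad βA hβA
          rwa [show (1 - βA) = βB by linarith] at this
        rw [e1, e2, grad_add_const, grad_add_const, sub_self, norm_zero]
        ring
      by_cases hxB : x ∈ XB
      · have hgrad : ∀ γ : ℝ, 0 < 1 - γ →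
            gradient (fun y => Real.log (γ * pA y + (1 - γ) * pB y)) x
              = gradient (fun y => Real.log (pB y) + Real.log (1 - γ)) x := by
          intro γ hγ
          apply Filter.EventuallyEq.gradient_eq
          filter_upwards [hXBopen.mem_nhds hxB] with y hy
          have hyA : y ∉ XA := fun h => (Set.disjoint_left.mp hdisj h) hy
          rw [hA0 y hyA, mul_zero, zero_add, Real.log_mul (ne_of_gt hγ)
            (ne_of_gt ((hpBsupp y).mpr hy)), add_comm]
        have e1 : gradient (fun y => Real.log (αA * pA y + αB * pB y)) x
            = gradient (fun y => Real.log (pB y) + Real.log (1 - αA)) x := by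
          have := hgrad αA (by linarith)
          rwa [show (1 - αA) = αB by linarith] at this ⊢
        have e2 : gradient (fun y => Real.log (βA * pA y + βB * pB y)) x
            = gradient (fun y => Real.log (pB y) + Real.log (1 - βA)) x := by
          have := hgrad βA (by linarith)
          rwa [show (1 - βA) = βB by linarith] at this ⊢
        rw [e1, e2, grad_add_const, grad_add_const, sub_self, norm_zero]
        ring
      · rw [hA0 x hxA, hB0 x hxB]
        ring
    simp only [h0, integral_zero, mul_zero]
  · intro hne heq
    obtain ⟨x, hx⟩ : ∃ x, 0 < pA x := by
      by_contra h
      push_neg at h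
      have : ∀ x, pA x = 0 := fun x => le_antisymm (h x) (hpAnn x)
      simp [this] at hpAint
    have hxA := (hpAsupp x).mp hx
    have hxB : pB x = 0 := hB0 x (fun h => Set.disjoint_left.mp hdisj hxA h)
    have := congrFun heq x
    simp only [hxB, mul_zero, add_zero] at this
    exact hne (mul_right_cancel₀ (ne_of_gt hx) this)
end
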